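/- The Gisin state ρ_G(λ,θ) = λ|ψ_θ⟩⟨ψ_θ| + (1-λ)/2 (|00⟩⟨00| + |11⟩⟨11|), where |ψ_θ⟩ = sin θ |01⟩ + cos θ |10⟩, has partial transpose with a negative eigenvalue if and only if 1 - λ < λ sin(2θ). -/

import Mathlib

open Matrix Kronecker Complex
open scoped ComplexOrder

noncomputable section

/-- Pauli matrices -/
def pauli : Fin 3 → Matrix (Fin 2) (Fin 2) ℂ
  | 0 => !![0, 1; 1, 0]
  | 1 => !![0, -Complex.I; Complex.I, 0]
  | 2 => !![1, 0; 0, -1]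

/-- The singlet Bell state |Ψ⁻⟩ = (|01⟩ - |10⟩)/√2 as a vector in ℂ²⊗ℂ². -/
def psiMinus : Fin 2 × Fin 2 → ℂ :=
  fun p => if p = (0, 1) then (1 / Real.sqrt 2 : ℝ) else
           if p = (1, 0) then (-(1 / Real.sqrt 2) : ℝ) else 0

/-- Outer product |v⟩⟨v|. -/
def outer {n : Type*} (v : n → ℂ) : Matrix n n ℂ :=
  fun i j => v i * starRingEnd ℂ (v j)

/-- The Werner state ρ_W(α) = α|Ψ⁻⟩⟨Ψ⁻| + (1-α)/4 · I₄. -/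
def wernerState (α : ℝ) : Matrix (Fin 2 × Fin 2) (Fin 2 × Fin 2) ℂ :=
  (α : ℂ) • outer psiMinus + (((1 - α) / 4 : ℝ) : ℂ) • (1 : Matrix (Fin 2 × Fin 2) (Fin 2 × Fin 2) ℂ)

/-- Partial trace over the first subsystem. -/
def ptrA {m n : Type*} [Fintype m] (ρ : Matrix (m × n) (m × n) ℂ) : Matrix n n ℂ :=
  fun i j => ∑ k, ρ (k, i) (k, j)

/-- Partial trace over the second subsystem. -/
def ptrB {m n : Type*} [Fintype n] (ρ : Matrix (m × n) (m × n) ℂ) : Matrix m m ℂ :=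
  fun i j => ∑ k, ρ (i, k) (j, k)

/-- Partial transpose on the second subsystem. -/
def ptransposeB {m n : Type*} (ρ : Matrix (m × n) (m × n) ℂ) : Matrix (m × n) (m × n) ℂ :=
  fun p q => ρ (p.1, q.2) (q.1, p.2)

/-- A density operator: positive semi-definite with unit trace. -/
def IsDensityOp {n : Type*} [Fintype n] [DecidableEq n] (ρ : Matrix n n ℂ) : Prop :=
  ρ.PosSemidef ∧ ρ.trace = 1

/-- Separability of a bipartite state: a convex combination of product density operators. -/
def IsSepState {m n : Type*} [Fintype m] [Fintype n] [DecidableEq m] [DecidableEq n]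
    (ρ : Matrix (m × n) (m × n) ℂ) : Prop :=
  ∃ (k : ℕ) (p : Fin k → ℝ) (A : Fin k → Matrix m m ℂ) (B : Fin k → Matrix n n ℂ),
    (∀ i, 0 ≤ p i) ∧ (∑ i, p i = 1) ∧
    (∀ i, IsDensityOp (A i)) ∧ (∀ i, IsDensityOp (B i)) ∧
    ρ = ∑ i, ((p i : ℂ)) • (A i ⊗ₖ B i)

/-- A Hermitian matrix has a negative eigenvalue. -/
def HasNegEigenvalue {n : Type*} [Fintype n] [DecidableEq n] (M : Matrix n n ℂ) : Prop :=
  ∃ (h : M.IsHermitian) (i : n), h.eigenvalues i < 0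

/-- Von Neumann entropy (base-2) of a matrix, via its eigenvalues (0 for non-Hermitian input). -/
def vNEntropy {n : Type*} [Fintype n] [DecidableEq n] (ρ : Matrix n n ℂ) : ℝ :=
  if h : ρ.IsHermitian then ∑ i, -(h.eigenvalues i) * Real.logb 2 (h.eigenvalues i) else 0

/-- Weyl (locally maximally mixed) two-qubit state with correlation coefficients t. -/
def weylState (t : Fin 3 → ℝ) : Matrix (Fin 2 × Fin 2) (Fin 2 × Fin 2) ℂ :=
  (1/4 : ℂ) • ((1 : Matrix (Fin 2 × Fin 2) (Fin 2 × Fin 2) ℂ) +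
    ∑ i, (t i : ℂ) • (pauli i ⊗ₖ pauli i))

/-- Matrix function via the continuous functional calculus (0 for non-Hermitian input). -/
def mfun {n : Type*} [Fintype n] [DecidableEq n] (f : ℝ → ℝ) (M : Matrix n n ℂ) :
    Matrix n n ℂ :=
  if h : M.IsHermitian then h.cfc f else 0

/-- Base-2 logarithm extended by 0 outside the support. -/
def log2supp (x : ℝ) : ℝ := if 0 < x then Real.logb 2 x else 0

/-- The Cerf–Adami conditional amplitude operator ρ_{A|B} = exp₂(log₂ ρ - log₂ (1 ⊗ ρ_B)). -/
def condAmpOp {m n : Type*} [Fintype m] [Fintype n] [DecidableEq m] [DecidableEq n]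
    (ρ : Matrix (m × n) (m × n) ℂ) : Matrix (m × n) (m × n) ℂ :=
  mfun (fun x => (2 : ℝ) ^ x)
    (mfun log2supp ρ - mfun log2supp ((1 : Matrix m m ℂ) ⊗ₖ ptrA ρ))

/-- The spin-flipped state σ_y⊗σ_y ρ* σ_y⊗σ_y. -/
def spinFlip (ρ : Matrix (Fin 2 × Fin 2) (Fin 2 × Fin 2) ℂ) :
    Matrix (Fin 2 × Fin 2) (Fin 2 × Fin 2) ℂ :=
  (pauli 1 ⊗ₖ pauli 1) * ρ.map (starRingEnd ℂ) * (pauli 1 ⊗ₖ pauli 1)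

/-- The Wootters concurrence of a two-qubit state ρ equals c: the λᵢ are the decreasingly
ordered (nonnegative) eigenvalues of ρ ρ̃ and c = max{0, √λ₁ - √λ₂ - √λ₃ - √λ₄}. -/
def ConcurrenceEq (ρ : Matrix (Fin 2 × Fin 2) (Fin 2 × Fin 2) ℂ) (c : ℝ) : Prop :=
  ∃ l : Fin 4 → ℝ, Antitone l ∧ (∀ i, 0 ≤ l i) ∧
    (ρ * spinFlip ρ).charpoly = ∏ i : Fin 4, (Polynomial.X - Polynomial.C ((l i : ℝ) : ℂ)) ∧
    c = max 0 (Real.sqrt (l 0) - Real.sqrt (l 1) - Real.sqrt (l 2) - Real.sqrt (l 3))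

/-- The state |ψ_θ⟩ = sin θ |01⟩ + cos θ |10⟩. -/
def psiTheta (θ : ℝ) : Fin 2 × Fin 2 → ℂ :=
  fun p => if p = (0, 1) then (Real.sin θ : ℝ) else
           if p = (1, 0) then (Real.cos θ : ℝ) else 0

/-- The state ρ_top = (|00⟩⟨00| + |11⟩⟨11|)/2. -/
def rhoTop : Matrix (Fin 2 × Fin 2) (Fin 2 × Fin 2) ℂ :=
  Matrix.diagonal (fun p => if p.1 = p.2 then (1/2 : ℂ) else 0)

/-- The Gisin state ρ_G(λ,θ) = λ|ψ_θ⟩⟨ψ_θ| + (1-λ) ρ_top. -/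
def gisinState (lam θ : ℝ) : Matrix (Fin 2 × Fin 2) (Fin 2 × Fin 2) ℂ :=
  (lam : ℂ) • outer (psiTheta θ) + ((1 - lam : ℝ) : ℂ) • rhoTop

/-- The Bell state |Ψ⁺⟩ = (|01⟩ + |10⟩)/√2. -/
def psiPlus : Fin 2 × Fin 2 → ℂ :=
  fun p => if p = (0, 1) then (1 / Real.sqrt 2 : ℝ) else
           if p = (1, 0) then (1 / Real.sqrt 2 : ℝ) else 0

/-- The entanglement witness W = (1/(2√3))(I + ∑ σₙ⊗σₙ). -/
def witnessW : Matrix (Fin 2 × Fin 2) (Fin 2 × Fin 2) ℂ :=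
  ((1 / (2 * Real.sqrt 3) : ℝ) : ℂ) •
    ((1 : Matrix (Fin 2 × Fin 2) (Fin 2 × Fin 2) ℂ) + ∑ i, pauli i ⊗ₖ pauli i)

/-! The partial transpose of `ρ_G(λ,θ)` is diagonal on `|01⟩, |10⟩`, with entries `λ sin² θ` and
`λ cos² θ`, and on `|00⟩, |11⟩` it is the block `[[(1-λ)/2, λ sin θ cos θ], [λ sin θ cos θ, (1-λ)/2]]`,
whose smaller eigenvalue `(1 - λ - λ sin 2θ)/2` belongs to `|00⟩ - |11⟩`. -/

theorem Matrix.IsHermitian.hasNegEigenvalue_iff_not_posSemidef {n : Type*} [Fintype n]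
    [DecidableEq n] {M : Matrix n n ℂ} (hM : M.IsHermitian) :
    HasNegEigenvalue M ↔ ¬ M.PosSemidef := by
  simp [HasNegEigenvalue, hM, hM.posSemidef_iff_eigenvalues_nonneg, Pi.le_def]

theorem Matrix.IsHermitian.ptransposeB {m n : Type*} {ρ : Matrix (m × n) (m × n) ℂ}
    (hρ : ρ.IsHermitian) : (ptransposeB ρ).IsHermitian := by
  ext p q
  exact congrFun (congrFun hρ (p.1, q.2)) (q.1, p.2)

theorem isHermitian_outer {n : Type*} (v : n → ℂ) : (outer v).IsHermitian := by
  ext i j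
  simp [outer, mul_comm]

theorem isHermitian_rhoTop : rhoTop.IsHermitian :=
  isHermitian_diagonal_of_self_adjoint _ <| funext fun p => by
    by_cases h : p.1 = p.2 <;> simp [h]

theorem isHermitian_gisinState (lam θ : ℝ) : (gisinState lam θ).IsHermitian :=
  ((isHermitian_outer _).smul (Complex.conj_ofReal lam)).add
    (isHermitian_rhoTop.smul (Complex.conj_ofReal _))

theorem dotProduct_ptransposeB_gisinState_mulVec (lam θ : ℝ) (x : Fin 2 × Fin 2 → ℂ) :
    star x ⬝ᵥ ptransposeB (gisinState lam θ) *ᵥ x =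
      (((1 - lam - lam * Real.sin (2 * θ)) / 2 * (normSq (x (0, 0)) + normSq (x (1, 1)))
        + lam * Real.sin (2 * θ) / 2 * normSq (x (0, 0) + x (1, 1))
        + lam * Real.sin θ ^ 2 * normSq (x (0, 1))
        + lam * Real.cos θ ^ 2 * normSq (x (1, 0)) : ℝ) : ℂ) := by
  simp only [dotProduct, mulVec, Fintype.sum_prod_type, Fin.sum_univ_two, ptransposeB,
    gisinState, Matrix.add_apply, Matrix.smul_apply, smul_eq_mul, outer, psiTheta, rhoTop,
    diagonal_apply, Real.sin_two_mul]
  generalize Real.sin θ = s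
  generalize Real.cos θ = c
  apply Complex.ext <;> simp [normSq_apply, -Complex.ofReal_pow] <;> ring

theorem posSemidef_ptransposeB_gisinState_iff {lam θ : ℝ} (hlam : 0 ≤ lam)
    (hθ : 0 ≤ Real.sin (2 * θ)) :
    (ptransposeB (gisinState lam θ)).PosSemidef ↔ lam * Real.sin (2 * θ) ≤ 1 - lam := by
  simp only [posSemidef_iff_dotProduct_mulVec, (isHermitian_gisinState lam θ).ptransposeB,
    true_and, dotProduct_ptransposeB_gisinState_mulVec, Complex.zero_le_real]
  constructor
  · intro h
    have h_witness := h (Pi.single (0, 0) 1 - Pi.single (1, 1) 1)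
    have hgap : 0 ≤ (1 - lam - lam * Real.sin (2 * θ)) / 2 := by simpa using h_witness
    linarith
  · intro h x
    have hgap : 0 ≤ (1 - lam - lam * Real.sin (2 * θ)) / 2 := by linarith
    have := normSq_nonneg (x (0, 0))
    have := normSq_nonneg (x (1, 1))
    have := normSq_nonneg (x (0, 1))
    have := normSq_nonneg (x (1, 0))
    have := normSq_nonneg (x (0, 0) + x (1, 1))
    positivity

/-- The partial transpose of the Gisin state has a negative eigenvalue iff
1 - λ < λ sin(2θ). -/
theorem gisin_ppt_criterion (lam θ : ℝ) (hlam : 0 ≤ lam ∧ lam ≤ 1)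
    (hθ : 0 < θ ∧ θ < Real.pi / 2) :
    HasNegEigenvalue (ptransposeB (gisinState lam θ)) ↔
      1 - lam < lam * Real.sin (2 * θ) := by
  have hsin : 0 ≤ Real.sin (2 * θ) :=
    Real.sin_nonneg_of_nonneg_of_le_pi (by linarith) (by linarith)
  rw [(isHermitian_gisinState lam θ).ptransposeB.hasNegEigenvalue_iff_not_posSemidef,
    posSemidef_ptransposeB_gisinState_iff hlam.1 hsin, not_le]

end
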